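/- arXiv:2505.07031 — 11 statements merged into one kernel-verified Lean document; each statement's English description precedes it below -/
import Mathlib

section
/- Let α ∈ (0,1] and let a, b, c, d be real numbers with a ≠ b and c ≠ d. Then |( |a−b|^(1+α)/(a−b) ) − ( |c−d|^(1+α)/(c−d) )| ≤ 8·|a−b−c+d|^α. -/
/-!
The map `x ↦ |x| ^ (1 + α) / x` is the odd power `x ↦ sign x * |x| ^ α`. On each half-line it is
`±x ^ α`, which is `α`-Hölder with constant `1` by subadditivity of `t ↦ t ^ α`; for arguments of
opposite signs both `|x|` and `|y|` are at most `|x - y|`, which gives the constant `2 ≤ 8`.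
-/

namespace Real

variable {α : ℝ}

lemma abs_rpow_sub_rpow_le (hα0 : 0 ≤ α) (hα1 : α ≤ 1) {u v : ℝ} (hu : 0 ≤ u) (hv : 0 ≤ v) :
    |u ^ α - v ^ α| ≤ |u - v| ^ α := by
  wlog hvu : v ≤ u generalizing u v
  · rw [abs_sub_comm, abs_sub_comm u v]
    exact this hv hu (le_of_not_ge hvu)
  have hmono : v ^ α ≤ u ^ α := rpow_le_rpow hv hvu hα0
  have hsubadd : u ^ α ≤ (u - v) ^ α + v ^ α := by
    simpa using rpow_add_le_add_rpow (sub_nonneg.2 hvu) hv hα0 hα1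
  rw [abs_of_nonneg (sub_nonneg.2 hmono), abs_of_nonneg (sub_nonneg.2 hvu)]
  linarith

lemma abs_rpow_one_add_div_self_of_nonneg (hα : 0 < α) {x : ℝ} (hx : 0 ≤ x) :
    |x| ^ (1 + α) / x = x ^ α := by
  rcases hx.eq_or_lt with rfl | hx
  · simp [zero_rpow hα.ne']
  · rw [abs_of_pos hx, rpow_add hx, rpow_one, mul_div_cancel_left₀ _ hx.ne']

lemma abs_rpow_one_add_div_neg (x : ℝ) : |-x| ^ (1 + α) / -x = -(|x| ^ (1 + α) / x) := by
  rw [abs_neg, div_neg]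

lemma abs_rpow_one_add_div_self_sub_le (hα0 : 0 < α) (hα1 : α ≤ 1) (x y : ℝ) :
    |(|x| ^ (1 + α)) / x - (|y| ^ (1 + α)) / y| ≤ 2 * |x - y| ^ α := by
  wlog hx : 0 ≤ x generalizing x y
  · have := this (-x) (-y) (by linarith)
    rwa [abs_rpow_one_add_div_neg, abs_rpow_one_add_div_neg, neg_sub_neg, neg_sub_neg,
      abs_sub_comm, abs_sub_comm y] at this
  rw [abs_rpow_one_add_div_self_of_nonneg hα0 hx]
  rcases le_or_gt 0 y with hy | hy
  · rw [abs_rpow_one_add_div_self_of_nonneg hα0 hy]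
    have hnn : 0 ≤ |x - y| ^ α := by positivity
    linarith [abs_rpow_sub_rpow_le hα0.le hα1 hx hy]
  · obtain ⟨z, hz, rfl⟩ : ∃ z, 0 < z ∧ y = -z := ⟨-y, by linarith, by ring⟩
    rw [abs_rpow_one_add_div_neg, abs_rpow_one_add_div_self_of_nonneg hα0 hz.le, sub_neg_eq_add,
      sub_neg_eq_add, abs_of_nonneg (by positivity), abs_of_pos (by linarith)]
    have hx_le : x ^ α ≤ (x + z) ^ α := rpow_le_rpow hx (by linarith) hα0.le
    have hz_le : z ^ α ≤ (x + z) ^ α := rpow_le_rpow hz.le (by linarith) hα0.le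
    linarith

end Real

theorem stmt2_general (α a b c d : ℝ) (hα0 : 0 < α) (hα1 : α ≤ 1) :
    |(|a - b| ^ (1 + α)) / (a - b) - (|c - d| ^ (1 + α)) / (c - d)|
      ≤ 8 * |a - b - c + d| ^ α := by
  have hnn : 0 ≤ |a - b - c + d| ^ α := by positivity
  rw [show a - b - c + d = (a - b) - (c - d) by ring] at hnn ⊢
  linarith [Real.abs_rpow_one_add_div_self_sub_le hα0 hα1 (a - b) (c - d)]

theorem stmt2 (α a b c d : ℝ) (hα0 : 0 < α) (hα1 : α ≤ 1) (hab : a ≠ b) (hcd : c ≠ d) :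
    |(|a - b| ^ (1 + α)) / (a - b) - (|c - d| ^ (1 + α)) / (c - d)|
      ≤ 8 * |a - b - c + d| ^ α :=
  stmt2_general α a b c d hα0 hα1
end

section
/- Let α ∈ (0,1] and let f : ℝ → ℝ be locally little Hölder continuous with exponent α, i.e., for every r > 0 and every ε > 0 there exists δ > 0 such that |f(u)−f(w)| ≤ ε·|u−w|^α for all u, w ∈ [−r, r] with |u−w| ≤ δ. Then f is quasi continuously differentiable with exponent α, i.e., for every r > 0 and ε > 0 there exists δ > 0 such that for all a,b,c,d ∈ [−r,r] with a ≠ b, c ≠ d, |a−c| ≤ δ, |b−d| ≤ δ, one has |((f(a)−f(b))(a−b))/|a−b|^(1+α) − ((f(c)−f(d))(c−d))/|c−d|^(1+α)| ≤ ε. -/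
/-!
Near the diagonal the quotient in the conclusion has absolute value `|f a - f b| / |a - b| ^ α`,
which little Hölder continuity makes uniformly small. Away from the diagonal the quotient is a
continuous function of `(a, b)` (little Hölder continuity with `α > 0` implies continuity of `f`)
on a compact set, hence uniformly continuous there.
-/

open Filter Topology Set

def IsLocallyLittleHolder (α : ℝ) (f : ℝ → ℝ) : Prop :=
  ∀ r > (0 : ℝ), ∀ ε > (0 : ℝ), ∃ δ > (0 : ℝ), ∀ u w : ℝ,
    |u| ≤ r → |w| ≤ r → |u - w| ≤ δ → |f u - f w| ≤ ε * |u - w| ^ α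

noncomputable def holderSlope (α : ℝ) (f : ℝ → ℝ) (p : ℝ × ℝ) : ℝ :=
  (f p.1 - f p.2) * (p.1 - p.2) / |p.1 - p.2| ^ (1 + α)

theorem abs_abs_sub_sub_abs_sub_le {G : Type*} [AddCommGroup G] [LinearOrder G]
    [IsOrderedAddMonoid G] (a b c d : G) : |(|a - b| - |c - d|)| ≤ |a - c| + |b - d| :=
  (abs_abs_sub_abs_le_abs_sub _ _).trans (by rw [sub_sub_sub_comm]; exact abs_sub _ _)

variable {α : ℝ} {f : ℝ → ℝ}

theorem IsLocallyLittleHolder.continuous (hf : IsLocallyLittleHolder α f) (hα : 0 < α) :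
    Continuous f := by
  refine continuous_iff_continuousAt.2 fun x => ?_
  obtain ⟨δ, hδ, hx⟩ := hf (|x| + 1) (by positivity) 1 one_pos
  have hnear : ∀ᶠ y in 𝓝 x, |y - x| ≤ min δ 1 := by
    filter_upwards [Metric.closedBall_mem_nhds x (lt_min hδ one_pos)] with y hy
    rwa [Metric.mem_closedBall, Real.dist_eq] at hy
  have hbound : ∀ᶠ y in 𝓝 x, ‖f y - f x‖ ≤ |y - x| ^ α := hnear.mono fun y hy => by
    have hyr : |y| ≤ |x| + 1 := by
      linarith [abs_sub_abs_le_abs_sub y x, min_le_right δ 1]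
    simpa using hx y x hyr (by linarith) (hy.trans (min_le_left δ 1))
  have hlim : Tendsto (fun y => |y - x| ^ α) (𝓝 x) (𝓝 0) := by
    simpa [Real.zero_rpow hα.ne'] using
      ((continuous_abs.comp (continuous_sub_right x)).rpow_const fun _ => Or.inr hα.le).tendsto x
  exact tendsto_sub_nhds_zero_iff.1 (squeeze_zero_norm' hbound hlim)

theorem abs_holderSlope {a b : ℝ} (hab : a ≠ b) :
    |holderSlope α f (a, b)| = |f a - f b| / |a - b| ^ α := by
  have h : 0 < |a - b| := abs_pos.2 (sub_ne_zero.2 hab)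
  dsimp only [holderSlope]
  rw [abs_div, abs_mul, abs_of_pos (Real.rpow_pos_of_pos h _), Real.rpow_add h, Real.rpow_one,
    mul_comm |a - b|, mul_div_mul_right _ _ h.ne']

theorem abs_holderSlope_le {a b ε : ℝ} (hab : a ≠ b) (h : |f a - f b| ≤ ε * |a - b| ^ α) :
    |holderSlope α f (a, b)| ≤ ε := by
  rw [abs_holderSlope hab, div_le_iff₀ (Real.rpow_pos_of_pos (abs_pos.2 (sub_ne_zero.2 hab)) _)]
  exact h

theorem continuousOn_holderSlope (hf : Continuous f) :
    ContinuousOn (holderSlope α f) {p | p.1 ≠ p.2} := by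
  refine ContinuousOn.div (by fun_prop) ?_ fun p hp => ?_
  · exact ContinuousOn.rpow_const (by fun_prop) fun p hp =>
      Or.inl (abs_ne_zero.2 (sub_ne_zero.2 hp))
  · exact (Real.rpow_pos_of_pos (abs_pos.2 (sub_ne_zero.2 hp)) _).ne'

theorem uniformContinuousOn_holderSlope (hf : Continuous f) (r : ℝ) {η : ℝ} (hη : 0 < η) :
    UniformContinuousOn (holderSlope α f) (Icc (-r) r ×ˢ Icc (-r) r ∩ {p | η ≤ |p.1 - p.2|}) := by
  refine IsCompact.uniformContinuousOn_of_continuous ?_ ((continuousOn_holderSlope hf).mono ?_)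
  · exact (isCompact_Icc.prod isCompact_Icc).inter_right
      (isClosed_le continuous_const (by fun_prop))
  · exact fun p hp => sub_ne_zero.1 (abs_pos.1 (hη.trans_le hp.2))

theorem stmt3_general (α : ℝ) (hα0 : 0 < α) (f : ℝ → ℝ)
    (hf : ∀ r > (0 : ℝ), ∀ ε > (0 : ℝ), ∃ δ > (0 : ℝ), ∀ u w : ℝ,
      |u| ≤ r → |w| ≤ r → |u - w| ≤ δ → |f u - f w| ≤ ε * |u - w| ^ α) :
    ∀ r > (0 : ℝ), ∀ ε > (0 : ℝ), ∃ δ > (0 : ℝ), ∀ a b c d : ℝ,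
      |a| ≤ r → |b| ≤ r → |c| ≤ r → |d| ≤ r → a ≠ b → c ≠ d →
      |a - c| ≤ δ → |b - d| ≤ δ →
      |((f a - f b) * (a - b)) / |a - b| ^ (1 + α)
        - ((f c - f d) * (c - d)) / |c - d| ^ (1 + α)| ≤ ε := by
  intro r hr ε hε
  obtain ⟨δ₀, hδ₀, hsmall⟩ := hf r hr (ε / 2) (half_pos hε)
  obtain ⟨δ₁, hδ₁, hfar⟩ := Metric.uniformContinuousOn_iff.1 (uniformContinuousOn_holderSlope
    (IsLocallyLittleHolder.continuous hf hα0) r (η := δ₀ / 4) (by positivity)) ε hε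
  refine ⟨min (δ₁ / 2) (δ₀ / 8), by positivity, fun a b c d ha hb hc hd hab hcd hac hbd => ?_⟩
  have hac' := le_min_iff.1 hac
  have hbd' := le_min_iff.1 hbd
  have hgap := abs_le.1 (abs_abs_sub_sub_abs_sub_le a b c d)
  change |holderSlope α f (a, b) - holderSlope α f (c, d)| ≤ ε
  by_cases hclose : |a - b| ≤ δ₀ / 2
  · have hab' := abs_holderSlope_le hab (hsmall a b ha hb (by linarith))
    have hcd' := abs_holderSlope_le hcd (hsmall c d hc hd (by linarith))
    linarith [abs_sub (holderSlope α f (a, b)) (holderSlope α f (c, d))]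
  · refine (hfar (a, b) ⟨⟨abs_le.1 ha, abs_le.1 hb⟩, by show δ₀ / 4 ≤ |a - b|; linarith⟩ (c, d)
      ⟨⟨abs_le.1 hc, abs_le.1 hd⟩, by show δ₀ / 4 ≤ |c - d|; linarith⟩ ?_).le
    rw [Prod.dist_eq, Real.dist_eq, Real.dist_eq]
    exact max_lt (by linarith) (by linarith)

theorem stmt3 (α : ℝ) (hα0 : 0 < α) (hα1 : α ≤ 1) (f : ℝ → ℝ)
    (hf : ∀ r > (0 : ℝ), ∀ ε > (0 : ℝ), ∃ δ > (0 : ℝ), ∀ u w : ℝ,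
      |u| ≤ r → |w| ≤ r → |u - w| ≤ δ → |f u - f w| ≤ ε * |u - w| ^ α) :
    ∀ r > (0 : ℝ), ∀ ε > (0 : ℝ), ∃ δ > (0 : ℝ), ∀ a b c d : ℝ,
      |a| ≤ r → |b| ≤ r → |c| ≤ r → |d| ≤ r → a ≠ b → c ≠ d →
      |a - c| ≤ δ → |b - d| ≤ δ →
      |((f a - f b) * (a - b)) / |a - b| ^ (1 + α)
        - ((f c - f d) * (c - d)) / |c - d| ^ (1 + α)| ≤ ε :=
  stmt3_general α hα0 f hf
end

section
/- Let α ∈ (0,1] and let f : ℝ → ℝ be quasi continuously differentiable with exponent α. Then f is Hölder continuous on bounded sets with exponent α: for every r > 0 there exists L_r ≥ 0 such that |f(u)−f(w)| ≤ L_r·|u−w|^α for all u, w ∈ [−r, r]. -/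
/-!
On the bounded set `{(a, b) : |a|, |b| ≤ r, a ≠ b}` the hypothesis says exactly that the quotient
`(f a - f b) (a - b) / |a - b| ^ (1 + α)` is uniformly continuous. A uniformly continuous function
on a totally bounded set has totally bounded, hence bounded, image; and the absolute value of the
quotient is `|f a - f b| / |a - b| ^ α`, so a bound `M` on it is a Hölder constant on `[-r, r]`.
-/

open Set

theorem UniformContinuousOn.totallyBounded_image {X Y : Type*} [UniformSpace X] [UniformSpace Y]
    {g : X → Y} {s : Set X} (hg : UniformContinuousOn g s) (hs : TotallyBounded s) :
    TotallyBounded (g '' s) := by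
  rw [uniformContinuousOn_iff_restrict] at hg
  have hs' : TotallyBounded (univ : Set s) := by
    rwa [← totallyBounded_image_iff isUniformEmbedding_subtype_val.isUniformInducing,
      image_univ, Subtype.range_coe]
  simpa only [image_univ, range_domRestrict] using hs'.image hg

namespace Holder

noncomputable def quotient (α : ℝ) (f : ℝ → ℝ) (p : ℝ × ℝ) : ℝ :=
  (f p.1 - f p.2) * (p.1 - p.2) / |p.1 - p.2| ^ (1 + α)

def offDiagSquare (r : ℝ) : Set (ℝ × ℝ) :=
  {p | |p.1| ≤ r ∧ |p.2| ≤ r ∧ p.1 ≠ p.2}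

theorem totallyBounded_offDiagSquare (r : ℝ) : TotallyBounded (offDiagSquare r) := by
  refine (isCompact_closedBall (0 : ℝ × ℝ) r).totallyBounded.subset ?_
  rintro p ⟨h₁, h₂, -⟩
  rw [Metric.mem_closedBall, Prod.dist_eq, max_le_iff]
  simpa only [Prod.fst_zero, Prod.snd_zero, Real.dist_0_eq_abs] using ⟨h₁, h₂⟩

theorem uniformContinuousOn_quotient {α r : ℝ} {f : ℝ → ℝ}
    (hf : ∀ ε > (0 : ℝ), ∃ δ > (0 : ℝ), ∀ a b c d : ℝ,
      |a| ≤ r → |b| ≤ r → |c| ≤ r → |d| ≤ r → a ≠ b → c ≠ d → |a - c| ≤ δ → |b - d| ≤ δ →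
      |quotient α f (a, b) - quotient α f (c, d)| ≤ ε) :
    UniformContinuousOn (quotient α f) (offDiagSquare r) := by
  rw [Metric.uniformContinuousOn_iff_le]
  intro ε hε
  obtain ⟨δ, hδ, h⟩ := hf ε hε
  refine ⟨δ, hδ, ?_⟩
  rintro ⟨a, b⟩ ⟨ha, hb, hab⟩ ⟨c, d⟩ ⟨hc, hd, hcd⟩ hdist
  rw [Prod.dist_eq, max_le_iff] at hdist
  exact h a b c d ha hb hc hd hab hcd hdist.1 hdist.2

theorem abs_quotient (α : ℝ) (f : ℝ → ℝ) {a b : ℝ} (hab : a ≠ b) :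
    |quotient α f (a, b)| = |f a - f b| / |a - b| ^ α := by
  have hpos : 0 < |a - b| := abs_pos.2 (sub_ne_zero.2 hab)
  rw [quotient, abs_div, abs_mul, abs_of_nonneg (Real.rpow_nonneg hpos.le _),
    Real.rpow_add hpos, Real.rpow_one, mul_comm |a - b|, mul_div_mul_right _ _ hpos.ne']

end Holder

open Holder in
theorem stmt4_general (α : ℝ) (f : ℝ → ℝ)
    (hf : ∀ r > (0 : ℝ), ∀ ε > (0 : ℝ), ∃ δ > (0 : ℝ), ∀ a b c d : ℝ,
      |a| ≤ r → |b| ≤ r → |c| ≤ r → |d| ≤ r → a ≠ b → c ≠ d →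
      |a - c| ≤ δ → |b - d| ≤ δ →
      |((f a - f b) * (a - b)) / |a - b| ^ (1 + α)
        - ((f c - f d) * (c - d)) / |c - d| ^ (1 + α)| ≤ ε) :
    ∀ r > (0 : ℝ), ∃ L ≥ (0 : ℝ), ∀ u w : ℝ, |u| ≤ r → |w| ≤ r →
      |f u - f w| ≤ L * |u - w| ^ α := by
  intro r hr
  have hQ := uniformContinuousOn_quotient (hf r hr)
  obtain ⟨M, hM⟩ := isBounded_iff_forall_norm_le.1
    (hQ.totallyBounded_image (totallyBounded_offDiagSquare r)).isBounded
  refine ⟨max M 0, le_max_right _ _, fun u w hu hw => ?_⟩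
  rcases eq_or_ne u w with rfl | huw
  · simpa using mul_nonneg (le_max_right M 0) (Real.rpow_nonneg le_rfl α)
  · have hQle : |quotient α f (u, w)| ≤ M := hM _ ⟨(u, w), ⟨hu, hw, huw⟩, rfl⟩
    have hpow : 0 < |u - w| ^ α := Real.rpow_pos_of_pos (abs_pos.2 (sub_ne_zero.2 huw)) α
    rw [abs_quotient α f huw, div_le_iff₀ hpow] at hQle
    exact hQle.trans (by gcongr; exact le_max_left _ _)

theorem stmt4 (α : ℝ) (hα0 : 0 < α) (hα1 : α ≤ 1) (f : ℝ → ℝ)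
    (hf : ∀ r > (0 : ℝ), ∀ ε > (0 : ℝ), ∃ δ > (0 : ℝ), ∀ a b c d : ℝ,
      |a| ≤ r → |b| ≤ r → |c| ≤ r → |d| ≤ r → a ≠ b → c ≠ d →
      |a - c| ≤ δ → |b - d| ≤ δ →
      |((f a - f b) * (a - b)) / |a - b| ^ (1 + α)
        - ((f c - f d) * (c - d)) / |c - d| ^ (1 + α)| ≤ ε) :
    ∀ r > (0 : ℝ), ∃ L ≥ (0 : ℝ), ∀ u w : ℝ, |u| ≤ r → |w| ≤ r →
      |f u - f w| ≤ L * |u - w| ^ α :=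
  stmt4_general α f hf
end

section
/- A function f : ℝ → ℝ is continuously differentiable if and only if f is quasi continuously differentiable with exponent α = 1, i.e., for every r > 0 and ε > 0 there exists δ > 0 such that for all a,b,c,d ∈ [−r,r] with a ≠ b, c ≠ d, |a−c| ≤ δ, |b−d| ≤ δ, one has |(f(a)−f(b))/(a−b) − (f(c)−f(d))/(c−d)| ≤ ε. -/
/-!
Since `ℝ × ℝ` carries the sup metric, the condition says that the divided difference
`(a, b) ↦ (f a - f b) / (a - b)` is uniformly continuous on `closedBall 0 r \ diagonal ℝ`.
For `f` of class `C¹` the divided difference agrees off the diagonal with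
`(a, b) ↦ ∫₀¹ f'((a - b) t + b) dt`, which is continuous on the whole plane, hence uniformly
continuous on compact sets. Conversely, a uniformly continuous map into a complete space has a limit
at every point of the closure of its domain; at `(x, x)` this limit is `f'(x)`, and the extension
of the divided difference by these limits is continuous on the diagonal.
-/

open Filter Set Topology Metric intervalIntegral

noncomputable def dividedDifference (f : ℝ → ℝ) (p : ℝ × ℝ) : ℝ := (f p.1 - f p.2) / (p.1 - p.2)

theorem uniformContinuousOn_dividedDifference_iff (f : ℝ → ℝ) (r : ℝ) :
    UniformContinuousOn (dividedDifference f) (closedBall 0 r \ diagonal ℝ) ↔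
      ∀ ε > 0, ∃ δ > 0, ∀ a b c d : ℝ, |a| ≤ r → |b| ≤ r → |c| ≤ r → |d| ≤ r → a ≠ b → c ≠ d →
        |a - c| ≤ δ → |b - d| ≤ δ → |(f a - f b) / (a - b) - (f c - f d) / (c - d)| ≤ ε := by
  simp only [uniformContinuousOn_iff_le, Prod.forall, Set.mem_sdiff, mem_closedBall_zero_iff,
    Prod.norm_mk, Real.norm_eq_abs, mem_diagonal_iff, Prod.dist_eq, Real.dist_eq, max_le_iff,
    dividedDifference]
  refine forall₂_congr fun ε _ => exists_congr fun δ => and_congr_right fun _ => ?_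
  constructor
  · intro h a b c d ha hb hc hd hab hcd hac hbd
    exact h a b ⟨⟨ha, hb⟩, hab⟩ c d ⟨⟨hc, hd⟩, hcd⟩ ⟨hac, hbd⟩
  · rintro h a b ⟨⟨ha, hb⟩, hab⟩ c d ⟨⟨hc, hd⟩, hcd⟩ ⟨hac, hbd⟩
    exact h a b c d ha hb hc hd hab hcd hac hbd

theorem dividedDifference_eq_integral_deriv {f : ℝ → ℝ} (hd : Differentiable ℝ f)
    (hc : Continuous (deriv f)) {a b : ℝ} (hab : a ≠ b) :
    dividedDifference f (a, b) = ∫ t in (0 : ℝ)..1, deriv f ((a - b) * t + b) := by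
  rw [integral_comp_mul_add _ (sub_ne_zero.2 hab), mul_zero, zero_add, mul_one, sub_add_cancel,
    integral_deriv_eq_sub (fun x _ => hd x) (hc.intervalIntegrable _ _), smul_eq_mul,
    dividedDifference, div_eq_inv_mul]

theorem ContDiff.uniformContinuousOn_dividedDifference {f : ℝ → ℝ} (hf : ContDiff ℝ 1 f)
    {K : Set (ℝ × ℝ)} (hK : IsCompact K) :
    UniformContinuousOn (dividedDifference f) (K \ diagonal ℝ) := by
  obtain ⟨hd, hc⟩ := contDiff_one_iff_deriv.mp hf
  have hintegral : Continuous fun p : ℝ × ℝ => ∫ t in (0 : ℝ)..1, deriv f ((p.1 - p.2) * t + p.2) :=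
    continuous_parametric_intervalIntegral_of_continuous' (by fun_prop) 0 1
  refine ((hK.uniformContinuousOn_of_continuous hintegral.continuousOn).mono sdiff_subset).congr ?_
  exact fun p hp => (dividedDifference_eq_integral_deriv hd hc hp.2).symm

theorem UniformContinuousOn.exists_tendsto_nhdsWithin {α β : Type*} [UniformSpace α]
    [UniformSpace β] [CompleteSpace β] {f : α → β} {s t : Set α} {x : α} [NeBot (𝓝[t] x)]
    (hf : UniformContinuousOn f s) (hs : s ∈ 𝓝[t] x) : ∃ y, Tendsto f (𝓝[t] x) (𝓝 y) :=
  cauchy_map_iff_exists_tendsto.mp <|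
    (cauchy_nhds.mono nhdsWithin_le_nhds).map_of_le hf (le_principal_iff.mpr hs)

theorem tendsto_prodMk_nhdsWithin_compl_diagonal {X : Type*} [TopologicalSpace X] (x : X) :
    Tendsto (fun y => (y, x)) (𝓝[≠] x) (𝓝[(diagonal X)ᶜ] (x, x)) :=
  tendsto_nhdsWithin_of_tendsto_nhds_of_eventually_within _
    (((continuous_id.prodMk continuous_const).tendsto' x (x, x) rfl).mono_left nhdsWithin_le_nhds)
    (eventually_nhdsWithin_of_forall fun _ hy => hy)

theorem contDiff_one_of_uniformContinuousOn_dividedDifference {f : ℝ → ℝ}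
    (h : ∀ r > 0, UniformContinuousOn (dividedDifference f) (closedBall 0 r \ diagonal ℝ)) :
    ContDiff ℝ 1 f := by
  have hneBot (x : ℝ) : NeBot (𝓝[(diagonal ℝ)ᶜ] (x, x)) :=
    (tendsto_prodMk_nhdsWithin_compl_diagonal x).neBot
  have hlim (x : ℝ) : ∃ L, Tendsto (dividedDifference f) (𝓝[(diagonal ℝ)ᶜ] (x, x)) (𝓝 L) := by
    refine (h (‖(x, x)‖ + 1) (by positivity)).exists_tendsto_nhdsWithin ?_
    exact sdiff_mem_nhdsWithin_compl (closedBall_mem_nhds_of_mem (by simp)) _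
  set g := extendFrom (diagonal ℝ)ᶜ (dividedDifference f)
  have hderiv (x : ℝ) : HasDerivAt f (g (x, x)) x := by
    have hslope : dividedDifference f ∘ (fun y => (y, x)) = slope f x := by
      ext y; simp [dividedDifference, slope_def_field]
    rw [hasDerivAt_iff_tendsto_slope, ← hslope]
    exact (tendsto_extendFrom (hlim x)).comp (tendsto_prodMk_nhdsWithin_compl_diagonal x)
  have hcont : ContinuousOn g (range fun x => (x, x)) := by
    refine continuousOn_extendFrom ?_ (forall_mem_range.mpr hlim)
    rintro _ ⟨x, rfl⟩
    exact mem_closure_iff_nhdsWithin_neBot.mpr (hneBot x)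
  refine contDiff_one_iff_deriv.mpr ⟨fun x => (hderiv x).differentiableAt, ?_⟩
  rw [funext fun x => (hderiv x).deriv]
  exact hcont.comp_continuous (continuous_id.prodMk continuous_id) mem_range_self

theorem stmt5 (f : ℝ → ℝ) :
    ContDiff ℝ 1 f ↔
      ∀ r > (0 : ℝ), ∀ ε > (0 : ℝ), ∃ δ > (0 : ℝ), ∀ a b c d : ℝ,
        |a| ≤ r → |b| ≤ r → |c| ≤ r → |d| ≤ r → a ≠ b → c ≠ d →
        |a - c| ≤ δ → |b - d| ≤ δ →
        |(f a - f b) / (a - b) - (f c - f d) / (c - d)| ≤ ε := by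
  simp only [← uniformContinuousOn_dividedDifference_iff]
  exact ⟨fun hf r _ => hf.uniformContinuousOn_dividedDifference (isCompact_closedBall 0 r),
    contDiff_one_of_uniformContinuousOn_dividedDifference⟩
end

section
/- For α ∈ (0,1], the function f(u) = |u|^α on ℝ is not quasi continuously differentiable with exponent α: there exist r > 0 and ε > 0 such that for every δ > 0 there are a,b,c,d ∈ [−r,r] with a ≠ b, c ≠ d, |a−c| ≤ δ, |b−d| ≤ δ, and |((f(a)−f(b))(a−b))/|a−b|^(1+α) − ((f(c)−f(d))(c−d))/|c−d|^(1+α)| > ε. In fact, for every 0 < u ≤ δ/2 the two pairs (u,0) and (−u,0) give difference exactly 2. -/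
/-!
On each side of the origin the difference quotient of `|·| ^ α` against `0`, normalised by
`|u - 0| ^ (1 + α)`, is the sign of `u`. So the symmetric pairs `(u, 0)` and `(-u, 0)`, which are
as close as we like, always give values `1` and `-1`, differing by `2`.
-/

open Real

lemma abs_rpow_mul_div_abs_rpow_one_add {α u : ℝ} (hu : u ≠ 0) :
    |u| ^ α * u / |u| ^ (1 + α) = u / |u| := by
  have hu' : 0 < |u| := abs_pos.mpr hu
  rw [rpow_add hu', rpow_one]
  field_simp

lemma abs_rpow_slope_sub_slope_neg_eq_two {α u : ℝ} (hα : 0 < α) (hu : 0 < u) :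
    |((|u| ^ α - |(0 : ℝ)| ^ α) * (u - 0)) / |u - 0| ^ (1 + α)
      - ((|-u| ^ α - |(0 : ℝ)| ^ α) * (-u - 0)) / |(-u) - 0| ^ (1 + α)| = 2 := by
  simp only [sub_zero, abs_zero, zero_rpow hα.ne']
  rw [abs_rpow_mul_div_abs_rpow_one_add hu.ne',
    abs_rpow_mul_div_abs_rpow_one_add (neg_ne_zero.mpr hu.ne'), abs_neg, abs_of_pos hu, neg_div,
    div_self hu.ne']
  norm_num

theorem stmt6_general (α : ℝ) (hα0 : 0 < α) (f : ℝ → ℝ)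
    (hf : f = fun u => |u| ^ α) :
    (∃ r > (0 : ℝ), ∃ ε > (0 : ℝ), ∀ δ > (0 : ℝ), ∃ a b c d : ℝ,
      |a| ≤ r ∧ |b| ≤ r ∧ |c| ≤ r ∧ |d| ≤ r ∧ a ≠ b ∧ c ≠ d ∧
      |a - c| ≤ δ ∧ |b - d| ≤ δ ∧
      ε < |((f a - f b) * (a - b)) / |a - b| ^ (1 + α)
            - ((f c - f d) * (c - d)) / |c - d| ^ (1 + α)|) ∧
    (∀ δ > (0 : ℝ), ∀ u : ℝ, 0 < u → u ≤ δ / 2 →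
      |((f u - f 0) * (u - 0)) / |u - 0| ^ (1 + α)
        - ((f (-u) - f 0) * (-u - 0)) / |(-u) - 0| ^ (1 + α)| = 2) := by
  subst hf
  refine ⟨⟨1, one_pos, 1, one_pos, fun δ hδ => ?_⟩,
    fun _ _ u hu _ => abs_rpow_slope_sub_slope_neg_eq_two hα0 hu⟩
  set u := min (δ / 2) 1
  have hu : 0 < u := lt_min (half_pos hδ) one_pos
  have hu1 : u ≤ 1 := min_le_right _ _
  have huδ : u ≤ δ / 2 := min_le_left _ _
  refine ⟨u, 0, -u, 0, by rwa [abs_of_pos hu], by simp, by rwa [abs_neg, abs_of_pos hu],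
    by simp, hu.ne', neg_ne_zero.mpr hu.ne', ?_, by simpa using hδ.le, ?_⟩
  · rw [sub_neg_eq_add, abs_of_pos (by linarith)]
    linarith
  · rw [abs_rpow_slope_sub_slope_neg_eq_two hα0 hu]
    norm_num

theorem stmt6 (α : ℝ) (hα0 : 0 < α) (hα1 : α ≤ 1) (f : ℝ → ℝ)
    (hf : f = fun u => |u| ^ α) :
    (∃ r > (0 : ℝ), ∃ ε > (0 : ℝ), ∀ δ > (0 : ℝ), ∃ a b c d : ℝ,
      |a| ≤ r ∧ |b| ≤ r ∧ |c| ≤ r ∧ |d| ≤ r ∧ a ≠ b ∧ c ≠ d ∧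
      |a - c| ≤ δ ∧ |b - d| ≤ δ ∧
      ε < |((f a - f b) * (a - b)) / |a - b| ^ (1 + α)
            - ((f c - f d) * (c - d)) / |c - d| ^ (1 + α)|) ∧
    (∀ δ > (0 : ℝ), ∀ u : ℝ, 0 < u → u ≤ δ / 2 →
      |((f u - f 0) * (u - 0)) / |u - 0| ^ (1 + α)
        - ((f (-u) - f 0) * (-u - 0)) / |(-u) - 0| ^ (1 + α)| = 2) :=
  stmt6_general α hα0 f hf
end

section
/- If f : ℝ → ℝ is continuously differentiable, then f is quasi continuously differentiable with any exponent α ∈ (0,1): for every r > 0 and ε > 0 there exists δ > 0 such that for all a,b,c,d ∈ [−r,r] with a ≠ b, c ≠ d, |a−c| ≤ δ, |b−d| ≤ δ, one has |((f(a)−f(b))(a−b))/|a−b|^(1+α) − ((f(c)−f(d))(c−d))/|c−d|^(1+α)| ≤ ε. -/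
/-!
Put `g (x, y) = (f x - f y) (x - y) / |x - y| ^ (1 + α)`, which is `0` on the diagonal as `t / 0 = 0`.
Since `f` is locally Lipschitz, `|g (x, y)| ≤ K |x - y| ^ (1 - α)` near each diagonal point,
and `1 - α > 0`, so `g` is continuous on `ℝ × ℝ`. On the compact square `[-r, r]²` it is
therefore uniformly continuous, which is the claim.
-/

open Filter Topology

noncomputable def powerDiffQuotient (α : ℝ) (f : ℝ → ℝ) (p : ℝ × ℝ) : ℝ :=
  (f p.1 - f p.2) * (p.1 - p.2) / |p.1 - p.2| ^ (1 + α)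

lemma powerDiffQuotient_of_eq {α : ℝ} (f : ℝ → ℝ) {p : ℝ × ℝ} (hp : p.1 = p.2) :
    powerDiffQuotient α f p = 0 := by
  simp [powerDiffQuotient, hp]

lemma abs_mul_sub_div_rpow_le {α K u x y : ℝ} (hα : α < 1) (hu : |u| ≤ K * |x - y|) :
    |u * (x - y) / |x - y| ^ (1 + α)| ≤ K * |x - y| ^ (1 - α) := by
  rcases eq_or_ne x y with rfl | hxy
  · simp [Real.zero_rpow (by linarith : (1 - α) ≠ 0)]
  set s := |x - y|
  have hs : 0 < s := abs_pos.mpr (sub_ne_zero.mpr hxy)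
  have hpow : s * s / s ^ (1 + α) = s ^ (1 - α) := by
    rw [div_eq_iff (by positivity), ← Real.rpow_add hs, show 1 - α + (1 + α) = (2 : ℝ) by ring,
      Real.rpow_two, sq]
  calc |u * (x - y) / s ^ (1 + α)| = |u| * s / s ^ (1 + α) := by
        rw [abs_div, abs_mul, abs_of_pos (by positivity : 0 < s ^ (1 + α))]
    _ ≤ K * s * s / s ^ (1 + α) := by gcongr
    _ = K * s ^ (1 - α) := by rw [mul_assoc, mul_div_assoc, hpow]

lemma tendsto_powerDiffQuotient_diag {α : ℝ} {f : ℝ → ℝ} (hf : LocallyLipschitz f) (hα : α < 1)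
    (x : ℝ) : Tendsto (powerDiffQuotient α f) (𝓝 (x, x)) (𝓝 0) := by
  obtain ⟨K, t, ht, hK⟩ := hf x
  have hbound : Tendsto (fun q : ℝ × ℝ => (K : ℝ) * |q.1 - q.2| ^ (1 - α)) (𝓝 (x, x))
      (𝓝 0) := by
    have hcont : Continuous fun q : ℝ × ℝ => (K : ℝ) * |q.1 - q.2| ^ (1 - α) :=
      continuous_const.mul (by fun_prop (disch := linarith))
    simpa [Real.zero_rpow (by linarith : (1 - α) ≠ 0)] using hcont.tendsto (x, x)
  refine squeeze_zero_norm' ?_ hbound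
  filter_upwards [prod_mem_nhds ht ht] with q hq
  refine abs_mul_sub_div_rpow_le hα ?_
  simpa [Real.dist_eq] using hK.dist_le_mul q.1 hq.1 q.2 hq.2

lemma continuous_powerDiffQuotient {α : ℝ} {f : ℝ → ℝ} (hf : LocallyLipschitz f) (hα : α < 1) :
    Continuous (powerDiffQuotient α f) := by
  refine continuous_iff_continuousAt.mpr fun p => ?_
  by_cases hp : p.1 = p.2
  · obtain ⟨x, y⟩ := p
    obtain rfl : x = y := hp
    rw [ContinuousAt, powerDiffQuotient_of_eq f rfl]
    exact tendsto_powerDiffQuotient_diag hf hα x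
  · have hs : 0 < |p.1 - p.2| := abs_pos.mpr (sub_ne_zero.mpr hp)
    have hfc := hf.continuous
    exact ContinuousAt.div (by fun_prop) (by fun_prop (disch := exact Or.inl hs.ne'))
      (Real.rpow_pos_of_pos hs _).ne'

lemma Continuous.exists_pos_forall_abs_sub_le_on_square {g : ℝ × ℝ → ℝ} (hg : Continuous g)
    (r : ℝ) {ε : ℝ} (hε : 0 < ε) : ∃ δ > 0, ∀ a b c d : ℝ,
      |a| ≤ r → |b| ≤ r → |c| ≤ r → |d| ≤ r → |a - c| ≤ δ → |b - d| ≤ δ →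
      |g (a, b) - g (c, d)| ≤ ε := by
  have hu := (isCompact_closedBall (0 : ℝ × ℝ) r).uniformContinuousOn_of_continuous
    hg.continuousOn
  obtain ⟨δ, hδ, H⟩ := Metric.uniformContinuousOn_iff_le.mp hu ε hε
  refine ⟨δ, hδ, fun a b c d ha hb hc hd hac hbd => ?_⟩
  have hmem : ∀ {x y : ℝ}, |x| ≤ r → |y| ≤ r → (x, y) ∈ Metric.closedBall (0 : ℝ × ℝ) r :=
    fun hx hy => by simpa [Prod.dist_eq, Real.dist_eq] using And.intro hx hy
  simpa [Real.dist_eq] using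
    H _ (hmem ha hb) _ (hmem hc hd) (by simpa [Prod.dist_eq, Real.dist_eq] using And.intro hac hbd)

theorem stmt7_general (α : ℝ) (hα1 : α < 1) (f : ℝ → ℝ) (hf : ContDiff ℝ 1 f) :
    ∀ r > (0 : ℝ), ∀ ε > (0 : ℝ), ∃ δ > (0 : ℝ), ∀ a b c d : ℝ,
      |a| ≤ r → |b| ≤ r → |c| ≤ r → |d| ≤ r → a ≠ b → c ≠ d →
      |a - c| ≤ δ → |b - d| ≤ δ →
      |((f a - f b) * (a - b)) / |a - b| ^ (1 + α)
        - ((f c - f d) * (c - d)) / |c - d| ^ (1 + α)| ≤ ε := by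
  intro r _ ε hε
  obtain ⟨δ, hδ, H⟩ := (continuous_powerDiffQuotient hf.locallyLipschitz hα1)
    |>.exists_pos_forall_abs_sub_le_on_square r hε
  exact ⟨δ, hδ, fun a b c d ha hb hc hd _ _ hac hbd => H a b c d ha hb hc hd hac hbd⟩

theorem stmt7 (α : ℝ) (hα0 : 0 < α) (hα1 : α < 1) (f : ℝ → ℝ) (hf : ContDiff ℝ 1 f) :
    ∀ r > (0 : ℝ), ∀ ε > (0 : ℝ), ∃ δ > (0 : ℝ), ∀ a b c d : ℝ,
      |a| ≤ r → |b| ≤ r → |c| ≤ r → |d| ≤ r → a ≠ b → c ≠ d →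
      |a - c| ≤ δ → |b - d| ≤ δ →
      |((f a - f b) * (a - b)) / |a - b| ^ (1 + α)
        - ((f c - f d) * (c - d)) / |c - d| ^ (1 + α)| ≤ ε :=
  stmt7_general α hα1 f hf
end

section
/- For 0 < α < β < 1 the function f(u) = |u|^β belongs to qC^{1,α}(ℝ) but is not continuously differentiable (it is not differentiable at 0). -/
/-!
Since `0 < β ≤ 1`, the function `|u| ^ β` is `β`-Hölder with constant `1`. Hence the quotient
`(f a - f b) (a - b) / |a - b| ^ (1 + α)` is bounded by `|a - b| ^ (β - α)`, which tends to `0`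
at the diagonal because `α < β`. Extended by `0` on the diagonal, the quotient is therefore a
continuous function on `ℝ × ℝ`, uniformly continuous on every compact square, which is the
`qC^{1,α}` property. On the other hand the right difference quotients of `|u| ^ β` at `0` are
`t ^ (β - 1) → ∞`.
-/

open Filter Topology

noncomputable def qcQuotient (f : ℝ → ℝ) (α : ℝ) (p : ℝ × ℝ) : ℝ :=
  if p.1 = p.2 then 0 else (f p.1 - f p.2) * (p.1 - p.2) / |p.1 - p.2| ^ (1 + α)

def MemQC1 (α : ℝ) (f : ℝ → ℝ) : Prop :=
  ∀ r > (0 : ℝ), ∀ ε > (0 : ℝ), ∃ δ > (0 : ℝ), ∀ a b c d : ℝ,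
    |a| ≤ r → |b| ≤ r → |c| ≤ r → |d| ≤ r → a ≠ b → c ≠ d →
    |a - c| ≤ δ → |b - d| ≤ δ →
    |((f a - f b) * (a - b)) / |a - b| ^ (1 + α)
      - ((f c - f d) * (c - d)) / |c - d| ^ (1 + α)| ≤ ε

namespace Real

lemma abs_rpow_sub_rpow_le_s8 {x y β : ℝ} (hx : 0 ≤ x) (hy : 0 ≤ y) (hβ0 : 0 ≤ β) (hβ1 : β ≤ 1) :
    |x ^ β - y ^ β| ≤ |x - y| ^ β := by
  wlog hyx : y ≤ x generalizing x y
  · rw [abs_sub_comm, abs_sub_comm x]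
    exact this hy hx (le_of_not_ge hyx)
  have hmono : y ^ β ≤ x ^ β := rpow_le_rpow hy hyx hβ0
  have hsub : x ^ β ≤ y ^ β + (x - y) ^ β := by
    simpa using rpow_add_le_add_rpow hy (sub_nonneg.2 hyx) hβ0 hβ1
  rw [abs_of_nonneg (sub_nonneg.2 hmono), abs_of_nonneg (sub_nonneg.2 hyx)]
  linarith

lemma abs_abs_rpow_sub_abs_rpow_le {β : ℝ} (hβ0 : 0 ≤ β) (hβ1 : β ≤ 1) (a b : ℝ) :
    |(|a| ^ β - |b| ^ β)| ≤ |a - b| ^ β :=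
  (abs_rpow_sub_rpow_le_s8 (abs_nonneg a) (abs_nonneg b) hβ0 hβ1).trans <|
    rpow_le_rpow (abs_nonneg _) (abs_abs_sub_abs_le_abs_sub a b) hβ0

theorem not_differentiableAt_abs_rpow_zero {β : ℝ} (hβ : β ≠ 0) (hβ1 : β < 1) :
    ¬ DifferentiableAt ℝ (fun u : ℝ ↦ |u| ^ β) 0 := by
  intro h
  have hslope : Tendsto (fun t : ℝ ↦ t ^ (β - 1)) (𝓝[>] 0) (𝓝 (deriv (fun u : ℝ ↦ |u| ^ β) 0)) := by
    refine tendsto_nhdsWithin_congr (fun t (ht : 0 < t) ↦ ?_)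
      h.hasDerivAt.tendsto_slope_zero_right
    simp [abs_of_pos ht, zero_rpow hβ, rpow_sub_one ht.ne', div_eq_inv_mul]
  exact not_tendsto_nhds_of_tendsto_atTop (tendsto_rpow_neg_nhdsGT_zero (by linarith)) _ hslope

end Real

section qcQuotient

variable {f : ℝ → ℝ} {α β C : ℝ}

lemma abs_qcQuotient_le (hC : 0 ≤ C) (hf : ∀ x y, |f x - f y| ≤ C * |x - y| ^ β) (p : ℝ × ℝ) :
    |qcQuotient f α p| ≤ C * |p.1 - p.2| ^ (β - α) := by
  obtain ⟨x, y⟩ := p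
  by_cases hxy : x = y
  · simp only [qcQuotient, if_pos hxy, abs_zero]
    positivity
  have ht : 0 < |x - y| := abs_pos.2 (sub_ne_zero.2 hxy)
  simp only [qcQuotient, if_neg hxy]
  calc |(f x - f y) * (x - y) / |x - y| ^ (1 + α)|
      = |f x - f y| * |x - y| / |x - y| ^ (1 + α) := by
        rw [abs_div, abs_mul, abs_of_pos (Real.rpow_pos_of_pos ht _)]
    _ ≤ C * |x - y| ^ β * |x - y| / |x - y| ^ (1 + α) := by gcongr; exact hf x y
    _ = C * |x - y| ^ (β - α) := by
        rw [mul_assoc, mul_div_assoc, ← Real.rpow_add_one ht.ne', ← Real.rpow_sub ht]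
        ring_nf

lemma continuous_qcQuotient (hcont : Continuous f) (hC : 0 ≤ C)
    (hf : ∀ x y, |f x - f y| ≤ C * |x - y| ^ β) (hαβ : α < β) :
    Continuous (qcQuotient f α) := by
  refine continuous_iff_continuousAt.2 fun p ↦ ?_
  by_cases hp : p.1 = p.2
  · have hbound : Tendsto (fun q : ℝ × ℝ ↦ C * |q.1 - q.2| ^ (β - α)) (𝓝 p) (𝓝 0) := by
      have hcont' : Continuous fun q : ℝ × ℝ ↦ C * |q.1 - q.2| ^ (β - α) :=
        continuous_const.mul <|
          (continuous_fst.sub continuous_snd).abs.rpow_const fun _ ↦ Or.inr (by linarith)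
      simpa [hp, Real.zero_rpow (sub_pos.2 hαβ).ne'] using hcont'.tendsto p
    rw [ContinuousAt, qcQuotient, if_pos hp]
    exact squeeze_zero_norm (abs_qcQuotient_le hC hf) hbound
  · have hne : ∀ᶠ q in 𝓝 p, q.1 ≠ q.2 :=
      (isOpen_ne_fun continuous_fst continuous_snd).mem_nhds hp
    have hpos : 0 < |p.1 - p.2| := abs_pos.2 (sub_ne_zero.2 hp)
    refine ContinuousAt.congr ?_ (hne.mono fun q hq ↦ (if_neg hq).symm)
    refine ContinuousAt.div (by fun_prop) ?_ (Real.rpow_pos_of_pos hpos _).ne'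
    exact ((continuous_fst.sub continuous_snd).abs.continuousAt).rpow_const (Or.inl hpos.ne')

lemma memQC1_of_continuous_qcQuotient (h : Continuous (qcQuotient f α)) : MemQC1 α f := by
  intro r _ ε hε
  set K := Metric.closedBall (0 : ℝ) r ×ˢ Metric.closedBall (0 : ℝ) r
  have hK : IsCompact K := (isCompact_closedBall _ _).prod (isCompact_closedBall _ _)
  obtain ⟨δ, hδ, H⟩ :=
    Metric.uniformContinuousOn_iff.1 (hK.uniformContinuousOn_of_continuous h.continuousOn) ε hε
  refine ⟨δ / 2, half_pos hδ, fun a b c d ha hb hc hd hab hcd hac hbd ↦ ?_⟩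
  have hmem : ∀ x y : ℝ, |x| ≤ r → |y| ≤ r → (x, y) ∈ K := fun x y hx hy ↦ by
    simp [K, hx, hy]
  have hdist : dist (a, b) (c, d) < δ := by
    rw [Prod.dist_eq, Real.dist_eq, Real.dist_eq]
    exact max_lt (by linarith) (by linarith)
  have := (H _ (hmem a b ha hb) _ (hmem c d hc hd) hdist).le
  rwa [Real.dist_eq, qcQuotient, qcQuotient, if_neg hab, if_neg hcd] at this

end qcQuotient

theorem stmt8 (α β : ℝ) (hα0 : 0 < α) (hαβ : α < β) (hβ1 : β < 1) (f : ℝ → ℝ)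
    (hf : f = fun u => |u| ^ β) :
    (∀ r > (0 : ℝ), ∀ ε > (0 : ℝ), ∃ δ > (0 : ℝ), ∀ a b c d : ℝ,
      |a| ≤ r → |b| ≤ r → |c| ≤ r → |d| ≤ r → a ≠ b → c ≠ d →
      |a - c| ≤ δ → |b - d| ≤ δ →
      |((f a - f b) * (a - b)) / |a - b| ^ (1 + α)
        - ((f c - f d) * (c - d)) / |c - d| ^ (1 + α)| ≤ ε) ∧
    ¬ DifferentiableAt ℝ f 0 := by
  have hβ0 : 0 < β := hα0.trans hαβ
  subst hf
  have hholder : ∀ x y : ℝ, |(|x| ^ β - |y| ^ β)| ≤ 1 * |x - y| ^ β := fun x y ↦ by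
    simpa using Real.abs_abs_rpow_sub_abs_rpow_le hβ0.le hβ1.le x y
  have hcont : Continuous fun u : ℝ ↦ |u| ^ β :=
    continuous_abs.rpow_const fun _ ↦ Or.inr hβ0.le
  exact ⟨memQC1_of_continuous_qcQuotient (continuous_qcQuotient hcont zero_le_one hholder hαβ),
    Real.not_differentiableAt_abs_rpow_zero hβ0.ne' hβ1⟩
end

section
/- Let E be a real or complex normed space, p, q ∈ [1,∞), and let f : E → E. Suppose the composition operator C_f(x)(n) = f(x(n)) maps bv_p(E) into bv_q(E) and is uniformly continuous, i.e., for every ε > 0 there is δ > 0 such that ‖C_f(x)−C_f(y)‖_{bv_q} ≤ ε whenever ‖x−y‖_{bv_p} ≤ δ. Then f(½(u+w)) = ½f(u) + ½f(w) for all u, w ∈ E; consequently the map φ(u) = f(u)−f(0) is additive. -/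
noncomputable def bvNorm {E : Type*} [NormedAddCommGroup E] (p : ℝ) (x : ℕ → E) : ℝ :=
  ‖x 0‖ + (∑' n : ℕ, ‖x (n + 1) - x n‖ ^ p) ^ (1 / p)

def memBV {E : Type*} [NormedAddCommGroup E] (p : ℝ) (x : ℕ → E) : Prop :=
  Summable fun n : ℕ => ‖x (n + 1) - x n‖ ^ p

/-!
Uniform continuity at `ε = 1` gives a `δ > 0` with `f (a + h) - f a = f (b + h) - f b` whenever
`‖h‖ ≤ δ`. Otherwise let `x` alternate `2N` times between `a + h` and `b + h`, and `y` between `a`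
and `b`: then `x - y` is the constant `h`, of bv_p-norm `‖h‖ ≤ δ`, while `C_f x - C_f y` jumps `2N`
times between two distinct values, so its bv_q-norm grows like `N ^ (1/q)`. Cutting an arbitrary
`h` into `n` pieces of norm at most `δ` and telescoping removes the restriction on `‖h‖`; the
midpoint identity (take `h = u - m = m - w`) and the additivity of `f - f 0` follow at once.
-/

def alternating {α : Type*} (a b : α) (N k : ℕ) : α :=
  if Odd k ∧ k < 2 * N then b else a

section

variable {α β E : Type*} [NormedAddCommGroup E]

theorem apply_alternating (g : α → β) (a b : α) (N k : ℕ) :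
    g (alternating a b N k) = alternating (g a) (g b) N k :=
  apply_ite g _ _ _

theorem alternating_sub_alternating (a b c d : E) (N k : ℕ) :
    alternating a b N k - alternating c d N k = alternating (a - c) (b - d) N k := by
  unfold alternating
  split_ifs <;> rfl

theorem norm_alternating_succ_sub (a b : E) (N k : ℕ) :
    ‖alternating a b N (k + 1) - alternating a b N k‖ = if k < 2 * N then ‖b - a‖ else 0 := by
  unfold alternating
  rcases Nat.even_or_odd k with hk | hk
  · have : ¬Odd k := Nat.not_odd_iff_even.mpr hk
    have : Odd (k + 1) := hk.add_one
    have : k < 2 * N ↔ k + 1 < 2 * N := by obtain ⟨m, rfl⟩ := hk; omega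
    split_ifs <;> simp_all
  · have : ¬Odd (k + 1) := Nat.not_odd_iff_even.mpr hk.add_one
    split_ifs <;> simp_all [norm_sub_rev]

theorem rpow_norm_alternating_succ_sub {q : ℝ} (hq : q ≠ 0) (a b : E) (N k : ℕ) :
    ‖alternating a b N (k + 1) - alternating a b N k‖ ^ q =
      if k < 2 * N then ‖b - a‖ ^ q else 0 := by
  rw [norm_alternating_succ_sub]
  split_ifs
  · rfl
  · exact Real.zero_rpow hq

theorem memBV_alternating {p : ℝ} (hp : p ≠ 0) (a b : E) (N : ℕ) :
    memBV p (alternating a b N) := by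
  refine summable_of_ne_finset_zero (s := Finset.range (2 * N)) fun k hk => ?_
  rw [rpow_norm_alternating_succ_sub hp, if_neg (by simpa using hk)]

theorem bvNorm_alternating {q : ℝ} (hq : q ≠ 0) (a b : E) (N : ℕ) :
    bvNorm q (alternating a b N) = ‖a‖ + (2 * N * ‖b - a‖ ^ q) ^ (1 / q) := by
  have hsum : ∑' k, ‖alternating a b N (k + 1) - alternating a b N k‖ ^ q =
      2 * N * ‖b - a‖ ^ q := by
    simp_rw [rpow_norm_alternating_succ_sub hq]
    rw [tsum_eq_sum (s := Finset.range (2 * N)) fun k hk => if_neg (by simpa using hk),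
      Finset.sum_ite_of_true fun k hk => Finset.mem_range.mp hk]
    simp
  rw [bvNorm, hsum]
  simp [alternating]

theorem bvNorm_alternating_self {q : ℝ} (hq : q ≠ 0) (a : E) (N : ℕ) :
    bvNorm q (alternating a a N) = ‖a‖ := by
  simp [bvNorm_alternating hq, Real.zero_rpow hq, Real.zero_rpow (inv_ne_zero hq)]

theorem exists_lt_bvNorm_alternating {q : ℝ} (hq : 0 < q) {a b : E} (hab : a ≠ b) (C : ℝ) :
    ∃ N : ℕ, C < bvNorm q (alternating a b N) := by
  have hjump : 0 < ‖b - a‖ ^ q := by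
    have := sub_ne_zero.mpr hab.symm
    positivity
  have hgrowth : Filter.Tendsto (fun N : ℕ => ‖a‖ + (2 * N * ‖b - a‖ ^ q) ^ (1 / q))
      Filter.atTop Filter.atTop :=
    Filter.tendsto_atTop_add_const_left _ _ <| (tendsto_rpow_atTop (by positivity)).comp <|
      (tendsto_natCast_atTop_atTop.const_mul_atTop two_pos).atTop_mul_const hjump
  simpa only [bvNorm_alternating hq.ne'] using (hgrowth.eventually_gt_atTop C).exists

theorem map_add_sub_map_eq_of_norm_le {F : Type*} [NormedAddCommGroup F] {p q δ ε : ℝ}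
    (hp : p ≠ 0) (hq : 0 < q) {f : E → F}
    (hf : ∀ x y : ℕ → E, memBV p x → memBV p y → bvNorm p (fun n => x n - y n) ≤ δ →
      bvNorm q (fun n => f (x n) - f (y n)) ≤ ε)
    {h : E} (hh : ‖h‖ ≤ δ) (a b : E) : f (a + h) - f a = f (b + h) - f b := by
  by_contra hne
  obtain ⟨N, hN⟩ := exists_lt_bvNorm_alternating hq hne ε
  have hx := memBV_alternating hp (a + h) (b + h) N
  have hy := memBV_alternating hp a b N
  have hdist : bvNorm p (fun n => alternating (a + h) (b + h) N n - alternating a b N n) ≤ δ := by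
    simp only [alternating_sub_alternating]
    rwa [add_sub_cancel_left, add_sub_cancel_left, bvNorm_alternating_self hp]
  have hbound := hf _ _ hx hy hdist
  simp only [apply_alternating f, alternating_sub_alternating] at hbound
  exact hN.not_ge hbound

end

theorem map_add_sub_map_eq_of_forall_norm_le {E F : Type*} [NormedAddCommGroup E]
    [NormedSpace ℝ E] [AddCommGroup F] {f : E → F} {δ : ℝ} (hδ : 0 < δ)
    (hf : ∀ h : E, ‖h‖ ≤ δ → ∀ a b : E, f (a + h) - f a = f (b + h) - f b)
    (h a b : E) : f (a + h) - f a = f (b + h) - f b := by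
  obtain ⟨n, hn⟩ := exists_nat_gt (‖h‖ / δ)
  have hn0 : (0 : ℝ) < n := lt_of_le_of_lt (by positivity) hn
  set k := (n : ℝ)⁻¹ • h
  have hk : ‖k‖ ≤ δ := by
    rw [norm_smul, norm_inv, Real.norm_natCast, inv_mul_le_iff₀ hn0]
    exact ((div_lt_iff₀ hδ).mp hn).le
  have hnk : n • k = h := by
    rw [← Nat.cast_smul_eq_nsmul ℝ, smul_smul, mul_inv_cancel₀ hn0.ne', one_smul]
  have htelescope : ∀ c : E,
      f (c + h) - f c = ∑ j ∈ Finset.range n, (f (c + j • k + k) - f (c + j • k)) := by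
    intro c
    simp_rw [add_assoc, ← succ_nsmul]
    rw [Finset.sum_range_sub (fun j => f (c + j • k)), hnk, zero_smul, add_zero]
  rw [htelescope, htelescope]
  exact Finset.sum_congr rfl fun j _ => hf k hk _ _

theorem stmt10_general {E : Type*} [NormedAddCommGroup E] [NormedSpace ℝ E]
    (p q : ℝ) (hp : 1 ≤ p) (hq : 1 ≤ q) (f : E → E)
    (hUC : ∀ ε > (0 : ℝ), ∃ δ > (0 : ℝ), ∀ x y : ℕ → E, memBV p x → memBV p y →
      bvNorm p (fun n => x n - y n) ≤ δ →
      bvNorm q (fun n => f (x n) - f (y n)) ≤ ε) :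
    (∀ u w : E, f ((1 / 2 : ℝ) • (u + w)) = (1 / 2 : ℝ) • f u + (1 / 2 : ℝ) • f w) ∧
    (∀ u w : E, f (u + w) - f 0 = (f u - f 0) + (f w - f 0)) := by
  obtain ⟨δ, hδ, hf⟩ := hUC 1 one_pos
  have hdiff := map_add_sub_map_eq_of_forall_norm_le hδ fun h hh =>
    map_add_sub_map_eq_of_norm_le (by linarith) (by linarith) hf hh
  refine ⟨fun u w => ?_, fun u w => ?_⟩
  · set m := (1 / 2 : ℝ) • (u + w)
    have hmid := hdiff (u - m) m w
    rw [add_sub_cancel, show w + (u - m) = m by module] at hmid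
    linear_combination (norm := module) (-1 / 2 : ℝ) • hmid
  · have := hdiff u w 0
    rw [add_comm w, zero_add] at this
    linear_combination (norm := module) this

theorem stmt10 {E : Type*} [NormedAddCommGroup E] [NormedSpace ℝ E]
    (p q : ℝ) (hp : 1 ≤ p) (hq : 1 ≤ q) (f : E → E)
    (hmaps : ∀ x : ℕ → E, memBV p x → memBV q (fun n => f (x n)))
    (hUC : ∀ ε > (0 : ℝ), ∃ δ > (0 : ℝ), ∀ x y : ℕ → E, memBV p x → memBV p y →
      bvNorm p (fun n => x n - y n) ≤ δ →
      bvNorm q (fun n => f (x n) - f (y n)) ≤ ε) :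
    (∀ u w : E, f ((1 / 2 : ℝ) • (u + w)) = (1 / 2 : ℝ) • f u + (1 / 2 : ℝ) • f w) ∧
    (∀ u w : E, f (u + w) - f 0 = (f u - f 0) + (f w - f 0)) :=
  stmt10_general p q hp hq f hUC
end

section
/- Let 1 ≤ p ≤ q < ∞ and let f : E → E be such that φ(u) := f(u) − f(0) is a continuous ℝ-linear map on the normed space E. Then the composition operator C_f maps bv_p(E) into bv_q(E) and is Lipschitz continuous: there exists L ≥ 0 such that ‖C_f(x)−C_f(y)‖_{bv_q} ≤ L‖x−y‖_{bv_p} for all x, y ∈ bv_p(E). -/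
section LpMonotone

variable {a : ℕ → ℝ} {p q : ℝ}

lemma le_tsum_rpow_rpow_one_div (ha : ∀ n, 0 ≤ a n) (hp : 0 < p)
    (hs : Summable fun n => a n ^ p) (n : ℕ) : a n ≤ (∑' n, a n ^ p) ^ (1 / p) := by
  calc a n = (a n ^ p) ^ (1 / p) := by rw [one_div, Real.rpow_rpow_inv (ha n) hp.ne']
    _ ≤ (∑' n, a n ^ p) ^ (1 / p) :=
      Real.rpow_le_rpow (Real.rpow_nonneg (ha n) p)
        (hs.le_tsum n fun m _ => Real.rpow_nonneg (ha m) p) (by positivity)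

lemma Real.rpow_le_rpow_mul_rpow_sub {x S : ℝ} (hx : 0 ≤ x) (hxS : x ≤ S) (hp : 0 ≤ p)
    (hpq : p ≤ q) : x ^ q ≤ x ^ p * S ^ (q - p) := by
  calc x ^ q = x ^ p * x ^ (q - p) := by
        rw [← Real.rpow_add_of_nonneg hx hp (sub_nonneg.2 hpq), add_sub_cancel]
    _ ≤ x ^ p * S ^ (q - p) := by gcongr

lemma tsum_rpow_rpow_one_div_le_of_le (ha : ∀ n, 0 ≤ a n) (hp : 0 < p) (hpq : p ≤ q)
    (hs : Summable fun n => a n ^ p) :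
    (∑' n, a n ^ q) ^ (1 / q) ≤ (∑' n, a n ^ p) ^ (1 / p) := by
  have hq : 0 < q := hp.trans_le hpq
  set S := (∑' n, a n ^ p) ^ (1 / p) with hS_def
  have hS : 0 ≤ S := Real.rpow_nonneg (tsum_nonneg fun n => Real.rpow_nonneg (ha n) p) _
  have hbound : ∀ n, a n ^ q ≤ a n ^ p * S ^ (q - p) := fun n =>
    Real.rpow_le_rpow_mul_rpow_sub (ha n) (le_tsum_rpow_rpow_one_div ha hp hs n) hp.le hpq
  have hsq : Summable fun n => a n ^ q :=
    (hs.mul_right _).of_nonneg_of_le (fun n => Real.rpow_nonneg (ha n) q) hbound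
  have hSp : ∑' n, a n ^ p = S ^ p := by
    rw [hS_def, one_div, Real.rpow_inv_rpow (tsum_nonneg fun n => Real.rpow_nonneg (ha n) p) hp.ne']
  calc (∑' n, a n ^ q) ^ (1 / q) ≤ (∑' n, a n ^ p * S ^ (q - p)) ^ (1 / q) :=
        Real.rpow_le_rpow (tsum_nonneg fun n => Real.rpow_nonneg (ha n) q)
          (hsq.tsum_le_tsum hbound (hs.mul_right _)) (by positivity)
    _ = (S ^ q) ^ (1 / q) := by
        rw [tsum_mul_right, hSp, ← Real.rpow_add_of_nonneg hS hp.le (sub_nonneg.2 hpq),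
          add_sub_cancel]
    _ = S := by rw [one_div, Real.rpow_rpow_inv hS hq.ne']

end LpMonotone

section BV

variable {E F : Type*} [NormedAddCommGroup E] [NormedAddCommGroup F] {p q : ℝ} {x y : ℕ → E}

lemma memBV_iff_memℓp (hp : 0 < p) :
    memBV p x ↔ Memℓp (fun n => x (n + 1) - x n) (ENNReal.ofReal p) := by
  rw [memℓp_gen_iff (by rwa [ENNReal.toReal_ofReal hp.le]), ENNReal.toReal_ofReal hp.le]
  rfl

lemma memBV.sub (hp : 0 < p) (hx : memBV p x) (hy : memBV p y) : memBV p (x - y) := by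
  rw [memBV_iff_memℓp hp] at *
  convert hx.sub hy using 1
  funext n
  simp only [Pi.sub_apply]
  abel

lemma memBV.mono (hp : 0 < p) (hpq : p ≤ q) (hx : memBV p x) : memBV q x :=
  (memBV_iff_memℓp (hp.trans_le hpq)).2 <|
    ((memBV_iff_memℓp hp).1 hx).of_exponent_ge (ENNReal.ofReal_le_ofReal hpq)

lemma memBV_add_const_iff (c : E) : memBV p (fun n => x n + c) ↔ memBV p x := by
  simp only [memBV, add_sub_add_right_eq_sub]

lemma bvNorm_le_of_le (hp : 0 < p) (hpq : p ≤ q) (hx : memBV p x) : bvNorm q x ≤ bvNorm p x :=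
  add_le_add le_rfl
    (tsum_rpow_rpow_one_div_le_of_le (fun _ => norm_nonneg _) hp hpq hx)

variable {𝕜 : Type*} [NontriviallyNormedField 𝕜] [NormedSpace 𝕜 E] [NormedSpace 𝕜 F]

lemma ContinuousLinearMap.norm_map_rpow_le (φ : E →L[𝕜] F) (hp : 0 ≤ p) (v : E) :
    ‖φ v‖ ^ p ≤ ‖φ‖ ^ p * ‖v‖ ^ p := by
  rw [← Real.mul_rpow (norm_nonneg _) (norm_nonneg _)]
  exact Real.rpow_le_rpow (norm_nonneg _) (φ.le_opNorm v) hp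

lemma memBV.clm_comp (φ : E →L[𝕜] F) (hp : 0 ≤ p) (hx : memBV p x) : memBV p (φ ∘ x) :=
  (hx.mul_left (‖φ‖ ^ p)).of_nonneg_of_le (fun n => Real.rpow_nonneg (norm_nonneg _) p)
    fun n => by
      rw [Function.comp_apply, Function.comp_apply, ← map_sub]
      exact φ.norm_map_rpow_le hp _

lemma bvNorm_clm_comp_le (φ : E →L[𝕜] F) (hp : 0 < p) (hx : memBV p x) :
    bvNorm p (φ ∘ x) ≤ ‖φ‖ * bvNorm p x := by
  have hsum : ∑' n, ‖φ (x (n + 1) - x n)‖ ^ p ≤ ‖φ‖ ^ p * ∑' n, ‖x (n + 1) - x n‖ ^ p := by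
    rw [← tsum_mul_left]
    have hφx : Summable fun n => ‖φ (x (n + 1) - x n)‖ ^ p := by
      simpa only [memBV, Function.comp_apply, map_sub] using hx.clm_comp φ hp.le
    exact hφx.tsum_le_tsum (fun n => φ.norm_map_rpow_le hp.le _) (hx.mul_left _)
  have hpow : (∑' n, ‖φ (x (n + 1) - x n)‖ ^ p) ^ (1 / p)
      ≤ ‖φ‖ * (∑' n, ‖x (n + 1) - x n‖ ^ p) ^ (1 / p) := by
    calc _ ≤ (‖φ‖ ^ p * ∑' n, ‖x (n + 1) - x n‖ ^ p) ^ (1 / p) := by gcongr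
      _ = _ := by
          rw [Real.mul_rpow (by positivity) (tsum_nonneg fun n => by positivity), one_div,
            Real.rpow_rpow_inv (norm_nonneg _) hp.ne']
  simp only [bvNorm, Function.comp_apply, ← map_sub, mul_add]
  exact add_le_add (φ.le_opNorm _) hpow

end BV

theorem stmt11 {E : Type*} [NormedAddCommGroup E] [NormedSpace ℝ E]
    (p q : ℝ) (hp : 1 ≤ p) (hpq : p ≤ q) (f : E → E)
    (hcont : Continuous fun u => f u - f 0)
    (hadd : ∀ u w : E, f (u + w) - f 0 = (f u - f 0) + (f w - f 0))
    (hhom : ∀ (t : ℝ) (u : E), f (t • u) - f 0 = t • (f u - f 0)) :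
    (∀ x : ℕ → E, memBV p x → memBV q (fun n => f (x n))) ∧
    ∃ L ≥ (0 : ℝ), ∀ x y : ℕ → E, memBV p x → memBV p y →
      bvNorm q (fun n => f (x n) - f (y n)) ≤ L * bvNorm p (fun n => x n - y n) := by
  obtain ⟨φ, hφ⟩ : ∃ φ : E →L[ℝ] E, ∀ u, φ u = f u - f 0 :=
    ⟨⟨IsLinearMap.mk' _ ⟨hadd, hhom⟩, hcont⟩, fun _ => rfl⟩
  have hp0 : 0 < p := one_pos.trans_le hp
  refine ⟨fun x hx => ?_, ‖φ‖, norm_nonneg φ, fun x y hx hy => ?_⟩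
  · have hfx : (fun n => f (x n)) = fun n => (φ ∘ x) n + f 0 := by
      funext n
      rw [Function.comp_apply, hφ, sub_add_cancel]
    rw [hfx, memBV_add_const_iff]
    exact (hx.mono hp0 hpq).clm_comp φ (hp0.trans_le hpq).le
  · have hfxy : (fun n => f (x n) - f (y n)) = φ ∘ (x - y) := by
      funext n
      rw [Function.comp_apply, Pi.sub_apply, map_sub, hφ, hφ, sub_sub_sub_cancel_right]
    rw [hfxy]
    calc bvNorm q (φ ∘ (x - y)) ≤ ‖φ‖ * bvNorm q (x - y) :=
          bvNorm_clm_comp_le φ (hp0.trans_le hpq) ((hx.sub hp0 hy).mono hp0 hpq)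
      _ ≤ ‖φ‖ * bvNorm p (x - y) := by
          gcongr
          exact bvNorm_le_of_le hp0 hpq (hx.sub hp0 hy)
end

section
/- Let 1 ≤ p ≤ q < ∞, let E be a normed space, and suppose the composition operator C_f : bv_p(E) → bv_q(E) is Hölder continuous with exponent α ∈ (0,1), i.e., there exists L ≥ 0 with ‖C_f(x)−C_f(y)‖_{bv_q} ≤ L‖x−y‖_{bv_p}^α for all x,y. If in addition φ(u) = f(u) − f(0) is ℝ-linear (which follows from uniform continuity), then f is constant. -/
open Filter Topology

section Constant

variable {E : Type*} [NormedAddCommGroup E]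

theorem memBV_const {p : ℝ} (hp : p ≠ 0) (v : E) : memBV p (fun _ : ℕ => v) := by
  simp [memBV, Real.zero_rpow hp]

theorem bvNorm_const {p : ℝ} (hp : p ≠ 0) (v : E) : bvNorm p (fun _ : ℕ => v) = ‖v‖ := by
  simp [bvNorm, Real.zero_rpow hp, Real.zero_rpow (inv_ne_zero hp)]

end Constant

theorem eq_zero_of_norm_le_rpow_of_smul {E F : Type*} [NormedAddCommGroup E] [NormedSpace ℝ E]
    [NormedAddCommGroup F] [NormedSpace ℝ F] {α L : ℝ} (hα : α < 1) {φ : E → F}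
    (hsmul : ∀ (t : ℝ) (u : E), 0 < t → φ (t • u) = t • φ u)
    (hbound : ∀ v, ‖φ v‖ ≤ L * ‖v‖ ^ α) (u : E) : φ u = 0 := by
  have hscaled : ∀ t : ℝ, 0 < t → ‖φ u‖ ≤ L * ‖u‖ ^ α * t ^ (α - 1) := by
    intro t ht
    have h := hbound (t • u)
    rw [hsmul t u ht, norm_smul, norm_smul, Real.norm_of_nonneg ht.le,
      Real.mul_rpow ht.le (norm_nonneg u)] at h
    calc ‖φ u‖ ≤ L * (t ^ α * ‖u‖ ^ α) / t := by rw [le_div_iff₀ ht]; linarith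
      _ = L * ‖u‖ ^ α * t ^ (α - 1) := by rw [Real.rpow_sub ht, Real.rpow_one]; ring
  have hlim : Tendsto (fun t : ℝ => L * ‖u‖ ^ α * t ^ (α - 1)) atTop (𝓝 0) := by
    simpa using (tendsto_rpow_neg_atTop (sub_pos.mpr hα)).const_mul (L * ‖u‖ ^ α)
  have hle : ‖φ u‖ ≤ 0 :=
    ge_of_tendsto hlim ((eventually_gt_atTop 0).mono hscaled)
  exact norm_le_zero_iff.mp hle

theorem stmt12_general {E : Type*} [NormedAddCommGroup E] [NormedSpace ℝ E]
    (p q α L : ℝ) (hp : 1 ≤ p) (hpq : p ≤ q) (hα1 : α < 1)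
    (f : E → E)
    (hHolder : ∀ x y : ℕ → E, memBV p x → memBV p y →
      bvNorm q (fun n => f (x n) - f (y n)) ≤ L * bvNorm p (fun n => x n - y n) ^ α)
    (hhom : ∀ (t : ℝ) (u : E), f (t • u) - f 0 = t • (f u - f 0)) :
    ∀ u : E, f u = f 0 := by
  have hp0 : p ≠ 0 := by linarith
  have hq0 : q ≠ 0 := by linarith
  have hbound : ∀ v : E, ‖f v - f 0‖ ≤ L * ‖v‖ ^ α := by
    intro v
    simpa [bvNorm_const hp0, bvNorm_const hq0] using
      hHolder (fun _ => v) (fun _ => 0) (memBV_const hp0 v) (memBV_const hp0 0)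
  intro u
  exact sub_eq_zero.mp
    (eq_zero_of_norm_le_rpow_of_smul hα1 (fun t u _ => hhom t u) hbound u)

theorem stmt12 {E : Type*} [NormedAddCommGroup E] [NormedSpace ℝ E]
    (p q α L : ℝ) (hp : 1 ≤ p) (hpq : p ≤ q) (hα0 : 0 < α) (hα1 : α < 1) (hL : 0 ≤ L)
    (f : E → E)
    (hmaps : ∀ x : ℕ → E, memBV p x → memBV q (fun n => f (x n)))
    (hHolder : ∀ x y : ℕ → E, memBV p x → memBV p y →
      bvNorm q (fun n => f (x n) - f (y n)) ≤ L * bvNorm p (fun n => x n - y n) ^ α)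
    (hadd : ∀ u w : E, f (u + w) - f 0 = (f u - f 0) + (f w - f 0))
    (hhom : ∀ (t : ℝ) (u : E), f (t • u) - f 0 = t • (f u - f 0)) :
    ∀ u : E, f u = f 0 :=
  stmt12_general p q α L hp hpq hα1 f hHolder hhom
end

section
/- Let E be a normed space, p ∈ (1,∞), and let f : E → E be such that f(u) ≠ f(0) for some u ∈ E, and C_f maps bv_p(E) into ℓ^∞(E). Then C_f is not continuous: there exist x ∈ bv_p(E) and a sequence (x_m) in bv_p(E) with ‖x−x_m‖_{bv_p} → 0 but ‖C_f(x)−C_f(x_m)‖_∞ ≥ ‖f(u)−f(0)‖ > 0 for all m. -/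
open Filter Topology

def truncateAt {E : Type*} [Zero E] (N : ℕ) (x : ℕ → E) (n : ℕ) : E :=
  if n < N then x n else 0

section Truncation

variable {E : Type*} [NormedAddCommGroup E] {p : ℝ}

lemma summable_increments_truncateAt (hp : 0 < p) (x : ℕ → E) (N : ℕ) :
    Summable fun n => ‖truncateAt N x (n + 1) - truncateAt N x n‖ ^ p := by
  refine summable_of_ne_finset_zero (s := Finset.range N) fun n hn => ?_
  rw [Finset.mem_range, not_lt] at hn
  simp [truncateAt, show ¬n < N by omega, show ¬n + 1 < N by omega, Real.zero_rpow hp.ne']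

lemma tsum_ite_le_eq_tsum_nat_add {M : Type*} [AddCommMonoid M] [TopologicalSpace M]
    {f : ℕ → M} (N : ℕ) :
    ∑' n, (if N ≤ n then f n else 0) = ∑' k, f (k + N) := by
  refine tsum_eq_tsum_of_ne_zero_bij (fun k => k.1 + N)
    (fun a b h => Subtype.ext (by simpa using h)) (fun n hn => ?_) (fun k => by simp)
  have hNn : N ≤ n := by by_contra h; simp [h] at hn
  exact ⟨⟨n - N, by simpa [Nat.sub_add_cancel hNn, hNn] using hn⟩,
    by simp [Nat.sub_add_cancel hNn]⟩

variable {x : ℕ → E} {N : ℕ}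

lemma increment_sub_truncateAt (hx : x N = 0) (n : ℕ) :
    (x (n + 1) - truncateAt N x (n + 1)) - (x n - truncateAt N x n) =
      if N ≤ n then x (n + 1) - x n else 0 := by
  unfold truncateAt
  by_cases h1 : n + 1 < N
  · simp [h1, show n < N by omega, show ¬N ≤ n by omega]
  by_cases h2 : n < N
  · obtain rfl : n + 1 = N := by omega
    simp [h2, hx]
  · simp [h1, h2, show N ≤ n by omega]

lemma bvNorm_sub_truncateAt (hp : 0 < p) (hx : x N = 0) :
    bvNorm p (fun n => x n - truncateAt N x n) =
      (∑' k, ‖x (k + N + 1) - x (k + N)‖ ^ p) ^ (1 / p) := by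
  have h0 : x 0 - truncateAt N x 0 = 0 := by
    rcases N.eq_zero_or_pos with rfl | hN
    · simp [truncateAt, hx]
    · simp [truncateAt, hN]
  rw [bvNorm, h0, norm_zero, zero_add]
  simp_rw [increment_sub_truncateAt hx, apply_ite (‖·‖ ^ p), norm_zero, Real.zero_rpow hp.ne']
  rw [tsum_ite_le_eq_tsum_nat_add N]

lemma tendsto_bvNorm_sub_truncateAt (hp : 0 < p) {N : ℕ → ℕ} (hN : Tendsto N atTop atTop)
    (hx : ∀ m, x (N m) = 0) :
    Tendsto (fun m => bvNorm p (fun n => x n - truncateAt (N m) x n)) atTop (𝓝 0) := by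
  simp_rw [bvNorm_sub_truncateAt hp (hx _)]
  have htail := (tendsto_sum_nat_add fun n => ‖x (n + 1) - x n‖ ^ p).comp hN
  have hroot := (Real.continuousAt_rpow_const 0 (1 / p) (Or.inr (by positivity))).tendsto
  rw [Real.zero_rpow (one_div_pos.mpr hp).ne'] at hroot
  exact hroot.comp htail

end Truncation

lemma summable_norm_smul_increments {E : Type*} [NormedAddCommGroup E] [NormedSpace ℝ E]
    {p : ℝ} {g : ℕ → ℝ} (hg : Summable fun n => |g (n + 1) - g n| ^ p) (u : E) :
    Summable fun n => ‖g (n + 1) • u - g n • u‖ ^ p := by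
  simp_rw [← sub_smul, norm_smul, Real.norm_eq_abs,
    Real.mul_rpow (abs_nonneg _) (norm_nonneg _)]
  exact hg.mul_right _

/-- The tent over the dyadic block `2 ^ k ≤ j ≤ 2 ^ (k + 1)`: it rises from `0` to `1` at
`j = 3 * 2 ^ (k - 1)` and falls back to `0`, with slope `2 / 2 ^ k`. -/
noncomputable def tent (k j : ℕ) : ℝ := 1 - |2 * (j : ℝ) / 2 ^ k - 3|

noncomputable def staircase (n : ℕ) : ℝ := tent (Nat.log 2 (n + 1)) (n + 1)

lemma abs_tent_succ_sub_le (k j : ℕ) : |tent k (j + 1) - tent k j| ≤ 2 / 2 ^ k := by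
  set a : ℝ := 2 * j / 2 ^ k - 3
  have hstep : 2 * ((j + 1 : ℕ) : ℝ) / 2 ^ k - 3 = a + 2 / 2 ^ k := by push_cast; ring
  calc |tent k (j + 1) - tent k j| = |(|a| - |a + 2 / 2 ^ k|)| := by
        rw [tent, tent, hstep]
        show |1 - |a + 2 / 2 ^ k| - (1 - |a|)| = _
        congr 1; ring
    _ ≤ |a - (a + 2 / 2 ^ k)| := abs_abs_sub_abs_le_abs_sub _ _
    _ = 2 / 2 ^ k := by rw [sub_add_cancel_left, abs_neg, abs_of_pos (by positivity)]

lemma tent_two_pow (k : ℕ) : tent k (2 ^ k) = 0 := by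
  norm_num [tent]

lemma tent_two_pow_succ (k : ℕ) : tent k (2 ^ (k + 1)) = 0 := by
  norm_num [tent, pow_succ, mul_div_assoc]

/-- At the end of a block both neighbouring tents vanish, so the step into the next block is
also a step of the current tent. -/
lemma staircase_succ (n : ℕ) : staircase (n + 1) = tent (Nat.log 2 (n + 1)) (n + 2) := by
  set k := Nat.log 2 (n + 1)
  have hlt : n + 1 < 2 ^ (k + 1) := Nat.lt_pow_succ_log_self one_lt_two _
  rcases (Nat.log_mono_right (b := 2) (Nat.le_succ (n + 1))).eq_or_lt with heq | hgt
  · rw [staircase, ← heq]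
  · have hend : n + 2 = 2 ^ (k + 1) := le_antisymm (by omega) (Nat.pow_le_of_le_log (by omega) hgt)
    rw [staircase, hend, Nat.log_pow one_lt_two, tent_two_pow, tent_two_pow_succ]

lemma abs_staircase_succ_sub_le (n : ℕ) : |staircase (n + 1) - staircase n| ≤ 4 / (n + 2) := by
  set k := Nat.log 2 (n + 1)
  have hle : (n : ℝ) + 2 ≤ 2 * 2 ^ k := by
    have hlt : n + 1 < 2 ^ k * 2 := Nat.lt_pow_succ_log_self one_lt_two _
    exact_mod_cast (by omega : n + 2 ≤ 2 * 2 ^ k)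
  calc |staircase (n + 1) - staircase n| = |tent k (n + 1 + 1) - tent k (n + 1)| := by
        rw [staircase_succ, staircase]
    _ ≤ 2 / 2 ^ k := abs_tent_succ_sub_le k _
    _ = 4 / (2 * 2 ^ k) := by ring
    _ ≤ 4 / (n + 2) := by gcongr

lemma summable_staircase_increments {p : ℝ} (hp : 1 < p) :
    Summable fun n => |staircase (n + 1) - staircase n| ^ p := by
  have hdom : Summable fun n : ℕ => 4 ^ p * (1 / |(n : ℝ) + 2| ^ p) :=
    ((Real.summable_one_div_nat_add_rpow 2 p).mpr hp).mul_left _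
  refine hdom.of_nonneg_of_le (fun n => by positivity) fun n => ?_
  calc |staircase (n + 1) - staircase n| ^ p ≤ (4 / (n + 2)) ^ p := by
        gcongr; exact abs_staircase_succ_sub_le n
    _ = 4 ^ p * (1 / |(n : ℝ) + 2| ^ p) := by
        rw [abs_of_pos (by positivity), Real.div_rpow (by norm_num) (by positivity), mul_one_div]

lemma staircase_two_pow_sub_one (k : ℕ) : staircase (2 ^ k - 1) = 0 := by
  rw [staircase, Nat.sub_add_cancel Nat.one_le_two_pow, Nat.log_pow one_lt_two, tent_two_pow]

lemma staircase_three_mul_two_pow_sub_one (k : ℕ) : staircase (3 * 2 ^ k - 1) = 1 := by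
  have h : 3 * 2 ^ k - 1 + 1 = 3 * 2 ^ k := by have := Nat.one_le_two_pow (n := k); omega
  have hlog : Nat.log 2 (3 * 2 ^ k) = k + 1 :=
    Nat.log_eq_of_pow_le_of_lt_pow (by rw [pow_succ]; omega) (by rw [pow_succ, pow_succ]; omega)
  rw [staircase, h, hlog, tent]
  norm_num [pow_succ]
  field_simp
  norm_num

theorem stmt19_general {E : Type*} [NormedAddCommGroup E] [NormedSpace ℝ E]
    (p : ℝ) (hp : 1 < p) (f : E → E) (u : E) (hu : f u ≠ f 0) :
    ∃ x : ℕ → E, (Summable fun n : ℕ => ‖x (n + 1) - x n‖ ^ p) ∧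
      ∃ xm : ℕ → ℕ → E,
        (∀ m : ℕ, Summable fun n : ℕ => ‖xm m (n + 1) - xm m n‖ ^ p) ∧
        Filter.Tendsto (fun m => bvNorm p (fun n => x n - xm m n)) Filter.atTop (nhds 0) ∧
        ((0 : ℝ) < ‖f u - f 0‖ ∧
          ∀ m : ℕ, ∃ n : ℕ, ‖f u - f 0‖ ≤ ‖f (x n) - f (xm m n)‖) := by
  set x : ℕ → E := fun n => staircase n • u
  have hstarts : Tendsto (fun m : ℕ => 2 ^ m - 1) atTop atTop :=
    tendsto_atTop_mono (fun m => Nat.le_sub_one_of_lt Nat.lt_two_pow_self) tendsto_id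
  have hzero (m : ℕ) : x (2 ^ m - 1) = 0 := by simp [x, staircase_two_pow_sub_one]
  refine ⟨x, summable_norm_smul_increments (summable_staircase_increments hp) u,
    fun m => truncateAt (2 ^ m - 1) x, fun m => summable_increments_truncateAt (by linarith) x _,
    tendsto_bvNorm_sub_truncateAt (by linarith) hstarts hzero,
    norm_pos_iff.mpr (sub_ne_zero.mpr hu), fun m => ⟨3 * 2 ^ m - 1, ?_⟩⟩
  have hpeak : x (3 * 2 ^ m - 1) = u := by simp [x, staircase_three_mul_two_pow_sub_one]
  have htrunc : truncateAt (2 ^ m - 1) x (3 * 2 ^ m - 1) = 0 := if_neg (by omega)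
  simp only [hpeak, htrunc, le_refl]

theorem stmt19 {E : Type*} [NormedAddCommGroup E] [NormedSpace ℝ E]
    (p : ℝ) (hp : 1 < p) (f : E → E) (u : E) (hu : f u ≠ f 0)
    (hmaps : ∀ x : ℕ → E, (Summable fun n : ℕ => ‖x (n + 1) - x n‖ ^ p) →
      ∃ C : ℝ, ∀ n : ℕ, ‖f (x n)‖ ≤ C) :
    ∃ x : ℕ → E, (Summable fun n : ℕ => ‖x (n + 1) - x n‖ ^ p) ∧
      ∃ xm : ℕ → ℕ → E,
        (∀ m : ℕ, Summable fun n : ℕ => ‖xm m (n + 1) - xm m n‖ ^ p) ∧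
        Filter.Tendsto (fun m => bvNorm p (fun n => x n - xm m n)) Filter.atTop (nhds 0) ∧
        ((0 : ℝ) < ‖f u - f 0‖ ∧
          ∀ m : ℕ, ∃ n : ℕ, ‖f u - f 0‖ ≤ ‖f (x n) - f (xm m n)‖) :=
  stmt19_general p hp f u hu
end
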